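/- arXiv:1203.3354 — 3 statements merged into one kernel-verified Lean document; each statement's English description precedes it below -/
import Mathlib

section
/- Let H be an infinite-dimensional Hilbert space and let P₀ ≤ P₁ ≤ ⋯ ≤ Pᵣ be orthogonal projections on H with rank(Pₛ − Pₛ₋₁) = 1 for 1 ≤ s ≤ r, and suppose the range of Pᵣ has infinite codimension (equivalently, the orthogonal complement of the range of Pᵣ is infinite-dimensional). Then for every ε > 0 there exist an orthogonal projection Q on H and positive integers m(0), …, m(r) such that ‖(Pᵣ Q Pᵣ)^{m(s)} − Pₛ‖ < ε for every 0 ≤ s ≤ r, where the norm is the operator norm. -/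
/-!
Write `Pₛ = P₀ + ∑_{t < s} eₜ eₜ*` with `(eₜ)` orthonormal in `ran P_r ⊖ ran P₀`, pick an
orthonormal family `(gₜ)` in the infinite-dimensional space `(ran P_r)ᗮ` and put
`fₜ = √λₜ eₜ + √(1 - λₜ) gₜ` and `Q = P₀ + ∑ₜ fₜ fₜ*`. Compressing `Q` to `ran P_r` kills the
`gₜ`-components, so `P_r Q P_r = P₀ + ∑ₜ λₜ eₜ eₜ*`, whose `m`-th power is `P₀ + ∑ₜ λₜ^m eₜ eₜ*`.
With `m(s) = N^(r-s)` and `λₜ^(N^(r-t-1)) = 1 - δ`, where `(1 - δ)^N < δ`, the number `λₜ^m(s)` is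
`δ`-close to `1` for `t < s` and to `0` for `t ≥ s`.
-/

def IsOrthoProj {𝕜 H : Type*} [RCLike 𝕜] [NormedAddCommGroup H]
    [InnerProductSpace 𝕜 H] [CompleteSpace H] (P : H →L[𝕜] H) : Prop :=
  P * P = P ∧ IsSelfAdjoint P

open InnerProductSpace Finset

section Increments

variable {M : Type*} [AddCommGroup M] {r : ℕ}

def increments (f : Fin (r + 1) → M) : Fin (r + 1) → M :=
  Fin.cons (f 0) fun t => f t.succ - f t.castSucc

@[simp] lemma increments_zero (f : Fin (r + 1) → M) : increments f 0 = f 0 := rfl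

@[simp] lemma increments_succ (f : Fin (r + 1) → M) (t : Fin r) :
    increments f t.succ = f t.succ - f t.castSucc := rfl

lemma sum_Iic_increments (f : Fin (r + 1) → M) (s : Fin (r + 1)) :
    ∑ i ∈ Iic s, increments f i = f s := by
  cases s using Fin.cases with
  | zero => simp [← filter_ge_eq_Iic, sum_filter]
  | succ a =>
    have : ∑ i ∈ Iic a.succ, increments f i =
        increments f 0 + ∑ t ∈ Iic a, increments f t.succ := by
      simp only [← filter_ge_eq_Iic, sum_filter, Fin.sum_univ_succ, Fin.zero_le, if_true,
        Fin.succ_le_succ_iff]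
    rw [this, increments_zero]
    simp only [increments_succ, Fin.sum_Iic_sub, add_sub_cancel]

end Increments

section Chain

variable {R : Type*} [Ring R] {r : ℕ} {p : Fin (r + 1) → R}

lemma mul_increments_of_le (hmono : ∀ s t, s ≤ t → p t * p s = p s) {i k : Fin (r + 1)}
    (h : i ≤ k) : p k * increments p i = increments p i := by
  cases i using Fin.cases with
  | zero => exact hmono 0 k h
  | succ t =>
    rw [increments_succ, mul_sub, hmono _ _ h, hmono _ _ (Fin.castSucc_le_succ t |>.trans h)]

lemma increments_mul_increments_of_lt (hmono : ∀ s t, s ≤ t → p t * p s = p s)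
    {i j : Fin (r + 1)} (h : i < j) : increments p j * increments p i = 0 := by
  obtain ⟨t, rfl⟩ := Fin.exists_succ_eq.mpr (Fin.ne_zero_of_lt h)
  rw [increments_succ, sub_mul, mul_increments_of_le hmono h.le,
    mul_increments_of_le hmono (Fin.le_castSucc_iff.mpr h), sub_self]

lemma isStarProjection_increments [StarRing R] (hp : ∀ s, IsStarProjection (p s))
    (hmono : ∀ s t, s ≤ t → p t * p s = p s) (i : Fin (r + 1)) :
    IsStarProjection (increments p i) := by
  cases i using Fin.cases with
  | zero => exact hp 0
  | succ t => exact (hp _).sub_of_mul_eq_right (hp _) (hmono _ _ (Fin.castSucc_le_succ t))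

lemma orthogonalIdempotents_increments [StarRing R] (hp : ∀ s, IsStarProjection (p s))
    (hmono : ∀ s t, s ≤ t → p t * p s = p s) : OrthogonalIdempotents (increments p) where
  idem i := (isStarProjection_increments hp hmono i).isIdempotentElem
  ortho i j hij := by
    rcases lt_or_gt_of_ne hij with h | h
    · have := congr(star $(increments_mul_increments_of_lt hmono h))
      rwa [star_mul, star_zero, (isStarProjection_increments hp hmono i).isSelfAdjoint.star_eq,
        (isStarProjection_increments hp hmono j).isSelfAdjoint.star_eq] at this
    · exact increments_mul_increments_of_lt hmono h

end Chain

lemma OrthogonalIdempotents.sum_smul_pow {R A ι : Type*} [CommSemiring R] [Semiring A]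
    [Algebra R A] [Fintype ι] {e : ι → A} (he : OrthogonalIdempotents e) (c : ι → R) {n : ℕ}
    (hn : n ≠ 0) : (∑ i, c i • e i) ^ n = ∑ i, c i ^ n • e i := by
  classical
  induction n with
  | zero => exact absurd rfl hn
  | succ n ih =>
    rcases eq_or_ne n 0 with rfl | hn
    · simp
    rw [pow_succ, ih hn]
    simp [sum_mul, mul_sum, he.mul_eq, smul_smul, pow_succ']

section RankOne

variable {𝕜 H : Type*} [RCLike 𝕜] [NormedAddCommGroup H] [InnerProductSpace 𝕜 H]

lemma orthonormal_iff_orthogonalIdempotents_rankOne {ι : Type*} {e : ι → H}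
    (he : ∀ i, ‖e i‖ = 1) :
    Orthonormal 𝕜 e ↔ OrthogonalIdempotents fun i => rankOne 𝕜 (e i) (e i) := by
  have hne : ∀ i, e i ≠ 0 := fun i h => by simpa [h] using he i
  refine ⟨fun h => ⟨fun i => isIdempotentElem_rankOne_self (he i), fun i j hij => ?_⟩,
    fun h => ⟨he, fun i j hij => ?_⟩⟩
  · simp [ContinuousLinearMap.mul_def, rankOne_comp_rankOne, h.2 hij]
  · have := h.ortho hij
    simpa [ContinuousLinearMap.mul_def, rankOne_comp_rankOne, hne] using this

lemma Orthonormal.isStarProjection_sum_rankOne [CompleteSpace H] {ι : Type*} [Fintype ι]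
    {f : ι → H} (hf : Orthonormal 𝕜 f) : IsStarProjection (∑ i, rankOne 𝕜 (f i) (f i)) :=
  ⟨((orthonormal_iff_orthogonalIdempotents_rankOne hf.1).1 hf).isIdempotentElem_sum,
    isSelfAdjoint_sum _ fun i _ => (isStarProjection_rankOne_self (hf.1 i)).isSelfAdjoint⟩

lemma orthonormal_ofReal_smul_add_ofReal_smul {ι : Type*} {e g : ι → H} (he : Orthonormal 𝕜 e)
    (hg : Orthonormal 𝕜 g) (heg : ∀ i j, inner 𝕜 (e i) (g j) = 0) {a b : ι → ℝ}
    (hab : ∀ i, a i ^ 2 + b i ^ 2 = 1) :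
    Orthonormal 𝕜 fun i => (a i : 𝕜) • e i + (b i : 𝕜) • g i := by
  classical
  rw [orthonormal_iff_ite] at he hg ⊢
  intro i j
  have hge : inner 𝕜 (g i) (e j) = 0 := by rw [← inner_conj_symm, heg, map_zero]
  simp only [inner_add_left, inner_add_right, inner_smul_left, inner_smul_right, he, hg, heg, hge,
    RCLike.conj_ofReal]
  split_ifs with hij
  · subst hij
    simp only [mul_one, mul_zero, add_zero, zero_add]
    exact_mod_cast (by nlinarith [hab i] : a i * a i + b i * b i = 1)
  · simp

lemma exists_orthonormal_of_not_finiteDimensional (K : Submodule 𝕜 H)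
    (hK : ¬ FiniteDimensional 𝕜 K) (n : ℕ) : ∃ g : Fin n → H, Orthonormal 𝕜 g ∧ ∀ i, g i ∈ K := by
  have hrank : (n : Cardinal) ≤ Module.rank 𝕜 K := by
    by_contra! h
    exact hK (Module.rank_lt_aleph0_iff.mp (h.trans Cardinal.natCast_lt_aleph0))
  obtain ⟨v, hv⟩ := exists_linearIndependent_of_le_rank hrank
  exact ⟨K.subtypeₗᵢ ∘ gramSchmidtNormed 𝕜 v,
    (gramSchmidtNormed_orthonormal hv).comp_linearIsometry _, fun i => (gramSchmidtNormed 𝕜 v i).2⟩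

lemma range_rankOne_self {e : H} (he : e ≠ 0) :
    LinearMap.range (rankOne 𝕜 e e : H →ₗ[𝕜] H) = 𝕜 ∙ e := by
  rw [toLinearMap_rankOne (𝕜 := 𝕜), LinearMap.range_smulRight_apply]
  exact fun h0 => he (by simpa using LinearMap.congr_fun h0 e)

lemma IsStarProjection.exists_eq_rankOne [CompleteSpace H] {p : H →L[𝕜] H}
    (hp : IsStarProjection p) (h : Module.finrank 𝕜 (LinearMap.range (p : H →ₗ[𝕜] H)) = 1) :
    ∃ e : H, ‖e‖ = 1 ∧ p = rankOne 𝕜 e e := by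
  obtain ⟨v, hv0, -⟩ := finrank_eq_one_iff'.mp h
  have hv : (v : H) ≠ 0 := by simpa using hv0
  set e : H := (‖(v : H)‖⁻¹ : 𝕜) • (v : H)
  have he : ‖e‖ = 1 := norm_smul_inv_norm hv
  have he0 : e ≠ 0 := by rintro h0; simp [h0] at he
  have : FiniteDimensional 𝕜 (LinearMap.range (p : H →ₗ[𝕜] H)) :=
    Module.finite_of_finrank_eq_succ h
  have hrange : 𝕜 ∙ e = LinearMap.range (p : H →ₗ[𝕜] H) :=
    Submodule.eq_of_le_of_finrank_eq
      ((Submodule.span_singleton_le_iff_mem _ _).mpr (Submodule.smul_mem _ _ v.2))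
      (by rw [finrank_span_singleton he0, h])
  refine ⟨e, he, ContinuousLinearMap.IsStarProjection.ext hp (isStarProjection_rankOne_self he) ?_⟩
  rw [← hrange, range_rankOne_self he0]

lemma exists_isStarProjection_compression_eq [CompleteSpace H] {R p : H →L[𝕜] H}
    (hR : IsStarProjection R) (hp : IsStarProjection p) (hRp : R * p = p)
    (hcodim : ¬ FiniteDimensional 𝕜 (LinearMap.range (R : H →ₗ[𝕜] H))ᗮ)
    {n : ℕ} {e : Fin n → H} (he : Orthonormal 𝕜 e) (hRe : ∀ i, R (e i) = e i)
    (hpe : ∀ i, p (e i) = 0) {c : Fin n → ℝ} (hc : ∀ i, 0 ≤ c i ∧ c i ≤ 1) :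
    ∃ Q : H →L[𝕜] H, IsStarProjection Q ∧
      R * Q * R = p + ∑ i, (c i : 𝕜) • rankOne 𝕜 (e i) (e i) := by
  obtain ⟨g, hg, hgR⟩ := exists_orthonormal_of_not_finiteDimensional _ hcodim n
  have hRadj : ContinuousLinearMap.adjoint R = R := hR.isSelfAdjoint
  have hpR : p * R = p := by
    simpa [hR.isSelfAdjoint.star_eq, hp.isSelfAdjoint.star_eq] using congr(star $hRp)
  have hRg : ∀ i, R (g i) = 0 := fun i => by
    simpa [ContinuousLinearMap.orthogonal_range, hRadj] using hgR i
  have hpg : ∀ i, p (g i) = 0 := fun i => by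
    rw [← hpR]; simp [hRg]
  have heg : ∀ i j, inner 𝕜 (e i) (g j) = 0 := fun i j =>
    Submodule.inner_right_of_mem_orthogonal (LinearMap.mem_range.mpr ⟨e i, hRe i⟩) (hgR j)
  set f : Fin n → H := fun i => (√(c i) : 𝕜) • e i + (√(1 - c i) : 𝕜) • g i
  have hf : Orthonormal 𝕜 f := orthonormal_ofReal_smul_add_ofReal_smul he hg heg fun i => by
    rw [Real.sq_sqrt (hc i).1, Real.sq_sqrt (sub_nonneg.2 (hc i).2)]; ring
  refine ⟨p + ∑ i, rankOne 𝕜 (f i) (f i), hp.add hf.isStarProjection_sum_rankOne ?_, ?_⟩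
  · simp [mul_sum, ContinuousLinearMap.mul_def, comp_rankOne, f, hpe, hpg]
  · have hsq : ∀ i, (√(c i) : 𝕜) * √(c i) = c i := fun i => by
      rw [← RCLike.ofReal_mul, Real.mul_self_sqrt (hc i).1]
    rw [mul_add, add_mul, hRp, hpR, mul_sum, sum_mul]
    congr 1
    refine sum_congr rfl fun i _ => ?_
    simp [ContinuousLinearMap.mul_def, comp_rankOne, rankOne_comp, hRadj, f, hRe, hRg, smul_smul,
      hsq]

end RankOne

lemma exists_pow_near_indicator (r : ℕ) {δ : ℝ} (hδ : 0 < δ) :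
    ∃ (c : Fin (r + 1) → ℝ) (m : Fin (r + 1) → ℕ), c 0 = 1 ∧ (∀ i, 0 ≤ c i ∧ c i ≤ 1) ∧
      (∀ s, m s ≠ 0) ∧ ∀ i s, |c i ^ m s - if i ≤ s then 1 else 0| ≤ δ := by
  set δ' := min δ (1 / 2)
  have hδ' : 0 < δ' := lt_min hδ one_half_pos
  set β := 1 - δ'
  have hβ0 : 0 ≤ β := by linarith [min_le_right δ (1 / 2)]
  have hβ1 : β < 1 := by linarith
  obtain ⟨N, hN⟩ := exists_pow_lt_of_lt_one hδ' hβ1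
  have hN0 : N ≠ 0 := by
    rintro rfl
    linarith [min_le_right δ (1 / 2), pow_zero β]
  set a : Fin (r + 1) → ℕ := fun i => N ^ (r - i)
  have ha0 : ∀ i, a i ≠ 0 := fun i => pow_ne_zero _ hN0
  set c : Fin (r + 1) → ℝ := fun i => if i = 0 then 1 else β ^ ((a i : ℝ)⁻¹)
  have hc : ∀ i, 0 ≤ c i ∧ c i ≤ 1 := fun i => by
    by_cases hi : i = 0
    · simp [c, hi]
    · simp only [c, hi, if_false]
      exact ⟨Real.rpow_nonneg hβ0 _, Real.rpow_le_one hβ0 hβ1.le (by positivity)⟩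
  have hca : ∀ i, i ≠ 0 → c i ^ a i = β := fun i hi => by
    simp only [c, hi, if_false]
    exact Real.rpow_inv_natCast_pow hβ0 (ha0 i)
  refine ⟨c, a, by simp [c], hc, ha0, fun i s => ?_⟩
  split_ifs with his
  · rcases eq_or_ne i 0 with rfl | hi
    · simp [c, hδ.le]
    have hle : β ≤ c i ^ a s := hca i hi ▸
      pow_le_pow_of_le_one (hc i).1 (hc i).2 (Nat.pow_le_pow_right (Nat.pos_of_ne_zero hN0)
        (by simp only [Fin.le_def] at his; omega))
    rw [abs_sub_comm, abs_of_nonneg (sub_nonneg.2 (pow_le_one₀ (hc i).1 (hc i).2))]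
    linarith [min_le_left δ (1 / 2)]
  · have hi : i ≠ 0 := by rintro rfl; exact his (Fin.zero_le s)
    have hle : c i ^ a s ≤ β ^ N := by
      rw [← hca i hi, ← pow_mul]
      refine pow_le_pow_of_le_one (hc i).1 (hc i).2 ?_
      rw [← pow_succ]
      refine Nat.pow_le_pow_right (Nat.pos_of_ne_zero hN0) ?_
      simp only [not_le, Fin.lt_def] at his
      omega
    rw [sub_zero, abs_of_nonneg (pow_nonneg (hc i).1 _)]
    linarith [min_le_left δ (1 / 2)]

lemma norm_sum_smul_le_of_isStarProjection {𝕜 A ι : Type*} [NormedField 𝕜]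
    [NonUnitalNormedRing A] [StarRing A] [CStarRing A] [NormedSpace 𝕜 A] (s : Finset ι)
    (a : ι → 𝕜) {d : ι → A} (hd : ∀ i, IsStarProjection (d i)) :
    ‖∑ i ∈ s, a i • d i‖ ≤ ∑ i ∈ s, ‖a i‖ :=
  (norm_sum_le _ _).trans <| sum_le_sum fun i _ =>
    (norm_smul_le _ _).trans (mul_le_of_le_one_right (norm_nonneg _) ((hd i).norm_le))

lemma norm_sum_smul_pow_sub_sum_Iic_le {𝕜 A : Type*} [RCLike 𝕜] [NormedRing A] [StarRing A]
    [CStarRing A] [NormedAlgebra 𝕜 A] {r : ℕ} {d : Fin (r + 1) → A} (hd : OrthogonalIdempotents d)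
    (hd' : ∀ i, IsStarProjection (d i)) (c : Fin (r + 1) → ℝ) {n : ℕ} (hn : n ≠ 0)
    (s : Fin (r + 1)) :
    ‖(∑ i, (c i : 𝕜) • d i) ^ n - ∑ i ∈ Iic s, d i‖ ≤
      ∑ i, |c i ^ n - if i ≤ s then 1 else 0| := by
  have : (∑ i, (c i : 𝕜) • d i) ^ n - ∑ i ∈ Iic s, d i =
      ∑ i, ((c i ^ n - if i ≤ s then 1 else 0 : ℝ) : 𝕜) • d i := by
    rw [hd.sum_smul_pow _ hn, ← filter_ge_eq_Iic, sum_filter, ← sum_sub_distrib]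
    refine sum_congr rfl fun i _ => ?_
    split_ifs <;> simp [sub_smul]
  rw [this]
  exact (norm_sum_smul_le_of_isStarProjection univ _ hd').trans_eq
    (by simp only [RCLike.norm_ofReal])

/-- Lemma 2: given increasing orthogonal projections `P₀ ≤ ⋯ ≤ P_r` with rank-one
consecutive differences, whose top range has infinite codimension, and `ε > 0`,
there exist an orthogonal projection `Q` and positive integers `m(0),…,m(r)` with
`‖(P_r Q P_r)^{m(s)} − Pₛ‖ < ε` for every `s`. -/
theorem lemma_two
    {𝕜 H : Type*} [RCLike 𝕜] [NormedAddCommGroup H] [InnerProductSpace 𝕜 H]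
    [CompleteSpace H]
    (r : ℕ) (P : Fin (r + 1) → (H →L[𝕜] H))
    (hproj : ∀ s, IsOrthoProj (P s))
    (hmono : ∀ s t, s ≤ t → P t * P s = P s)
    (hrank : ∀ s : Fin r,
      Module.finrank 𝕜
        ↥(LinearMap.range ((P s.succ - P s.castSucc : H →L[𝕜] H) : H →ₗ[𝕜] H)) = 1)
    (hcodim : ¬ FiniteDimensional 𝕜
      ↥((LinearMap.range ((P (Fin.last r) : H →L[𝕜] H) : H →ₗ[𝕜] H))ᗮ))
    (ε : ℝ) (hε : 0 < ε) :
    ∃ (Q : H →L[𝕜] H) (m : Fin (r + 1) → ℕ),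
      IsOrthoProj Q ∧ (∀ s, 1 ≤ m s) ∧
      (∀ s, ‖(P (Fin.last r) * Q * P (Fin.last r)) ^ (m s) - P s‖ < ε) := by
  have hP : ∀ s, IsStarProjection (P s) := fun s => ⟨(hproj s).1, (hproj s).2⟩
  have hd := orthogonalIdempotents_increments hP hmono
  choose e he hde using fun t : Fin r =>
    (isStarProjection_increments hP hmono t.succ).exists_eq_rankOne (hrank t)
  have he_orth : Orthonormal 𝕜 e := (orthonormal_iff_orthogonalIdempotents_rankOne he).2 <| by
    simpa [Function.comp_def, hde] using hd.embedding (Fin.succEmb r)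
  obtain ⟨c, m, hc0, hc, hm, hcm⟩ := exists_pow_near_indicator r (δ := ε / (r + 2)) (by positivity)
  have hRe : ∀ t, P (Fin.last r) (e t) = e t := fun t => by
    simpa [hde, he t] using congr($(mul_increments_of_le hmono (Fin.le_last t.succ)) (e t))
  have hpe : ∀ t, P 0 (e t) = 0 := fun t => by
    simpa [hde, he t] using congr($(hd.ortho (Fin.succ_ne_zero t).symm) (e t))
  obtain ⟨Q, hQ, hRQR⟩ := exists_isStarProjection_compression_eq (hP _) (hP 0)
    (hmono _ _ (Fin.zero_le _)) hcodim he_orth hRe hpe fun t => hc t.succ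
  refine ⟨Q, m, ⟨hQ.1, hQ.2⟩, fun s => Nat.one_le_iff_ne_zero.2 (hm s), fun s => ?_⟩
  have hA : P (Fin.last r) * Q * P (Fin.last r) = ∑ i, (c i : 𝕜) • increments P i := by
    simp [hRQR, Fin.sum_univ_succ, hc0, hde]
  rw [hA, ← sum_Iic_increments P s]
  calc _ ≤ ∑ i, |c i ^ m s - if i ≤ s then 1 else 0| :=
        norm_sum_smul_pow_sub_sum_Iic_le hd (isStarProjection_increments hP hmono) c (hm s) s
    _ ≤ ∑ _i : Fin (r + 1), ε / (r + 2) := sum_le_sum fun i _ => hcm i s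
    _ < ε := by
      rw [sum_const, card_univ, Fintype.card_fin, nsmul_eq_mul, ← mul_div_assoc,
        div_lt_iff₀ (by positivity)]
      push_cast
      nlinarith
end

section
/- Let e, e' be orthonormal vectors in a Hilbert space H, let r ≥ 1 be an integer, and for 0 ≤ s ≤ r set fₛ = cos(πs/(2r)) e + sin(πs/(2r)) e'. Let f̂ₛ denote the orthogonal projection onto span(fₛ). Then ⟨f̂ᵣ f̂ᵣ₋₁ ⋯ f̂₀ e, e'⟩ = (cos(π/(2r)))^r. -/
/-!
All the vectors `fₛ` lie on the unit circle `θ ↦ cos θ • e + sin θ • e'` of the plane spanned by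
`e, e'`, and consecutive ones are at angle `δ = π/(2r)`. Projecting a point of this circle onto the
line through the point at angle `δ` further on multiplies it by `cos δ` and moves it there. Hence
`f̂ₛ ⋯ f̂₀ e = cos δ ^ s • fₛ`, and at `s = r` we reach `fᵣ = e'`.
-/

/-- The rank-one orthogonal projection `x ↦ ⟨f, x⟩ f` onto the span of a unit vector `f`. -/
noncomputable def projOnto (𝕜 : Type*) {H : Type*} [RCLike 𝕜] [NormedAddCommGroup H]
    [InnerProductSpace 𝕜 H] (f : H) : H →L[𝕜] H :=
  (innerSL 𝕜 f).smulRight f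

open Real

section

variable (𝕜 : Type*) {H : Type*} [RCLike 𝕜] [NormedAddCommGroup H] [InnerProductSpace 𝕜 H]

lemma projOnto_apply (f x : H) : projOnto 𝕜 f x = inner 𝕜 f x • f := rfl

noncomputable def circlePoint (e e' : H) (θ : ℝ) : H :=
  ((cos θ : ℝ) : 𝕜) • e + ((sin θ : ℝ) : 𝕜) • e'

variable {𝕜} {e e' : H}

lemma circlePoint_zero : circlePoint 𝕜 e e' 0 = e := by
  simp [circlePoint]

lemma circlePoint_pi_div_two : circlePoint 𝕜 e e' (π / 2) = e' := by
  simp [circlePoint]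

variable (he : ‖e‖ = 1) (he' : ‖e'‖ = 1) (hee' : inner 𝕜 e e' = (0 : 𝕜))
include he he' hee'

lemma inner_circlePoint (a b : ℝ) :
    inner 𝕜 (circlePoint 𝕜 e e' a) (circlePoint 𝕜 e e' b) = ((cos (a - b) : ℝ) : 𝕜) := by
  have hee : inner 𝕜 e e = (1 : 𝕜) := by simp [inner_self_eq_norm_sq_to_K, he]
  have he'e' : inner 𝕜 e' e' = (1 : 𝕜) := by simp [inner_self_eq_norm_sq_to_K, he']
  have he'e : inner 𝕜 e' e = (0 : 𝕜) := by rw [← inner_conj_symm, hee', map_zero]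
  simp only [circlePoint, inner_add_left, inner_add_right, inner_smul_left, inner_smul_right,
    hee, he'e', he'e, hee', RCLike.conj_ofReal, cos_sub]
  push_cast
  ring

lemma projOnto_circlePoint (a b : ℝ) :
    projOnto 𝕜 (circlePoint 𝕜 e e' b) (circlePoint 𝕜 e e' a)
      = ((cos (b - a) : ℝ) : 𝕜) • circlePoint 𝕜 e e' b := by
  rw [projOnto_apply, inner_circlePoint he he' hee']

lemma prod_projOnto_circlePoint_apply (δ : ℝ) (n : ℕ) :
    (List.ofFn fun s : Fin (n + 1) => projOnto 𝕜 (circlePoint 𝕜 e e' (s * δ))).reverse.prod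
        (circlePoint 𝕜 e e' 0)
      = ((cos δ ^ n : ℝ) : 𝕜) • circlePoint 𝕜 e e' (n * δ) := by
  induction n with
  | zero => simp [projOnto_circlePoint he he' hee']
  | succ n ih =>
    have h_step : ((n + 1 : ℕ) : ℝ) * δ - n * δ = δ := by push_cast; ring
    rw [List.ofFn_succ', List.concat_eq_append, List.reverse_append, List.prod_append]
    simp only [Fin.val_castSucc, Fin.val_last, List.reverse_singleton, List.prod_singleton]
    rw [mul_apply_eq_comp, ih, map_smul, projOnto_circlePoint he he' hee', smul_smul, h_step,
      ← RCLike.ofReal_mul, pow_succ]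

end

/-- For orthonormal `e, e'`, `r ≥ 1` and `fₛ = cos(πs/(2r)) e + sin(πs/(2r)) e'`,
one has `⟨f̂ᵣ f̂ᵣ₋₁ ⋯ f̂₀ e, e'⟩ = (cos(π/(2r)))^r`. -/
theorem chain_of_rank_one_projections
    {𝕜 H : Type*} [RCLike 𝕜] [NormedAddCommGroup H] [InnerProductSpace 𝕜 H]
    (e e' : H) (he : ‖e‖ = 1) (he' : ‖e'‖ = 1) (hee' : inner 𝕜 e e' = (0 : 𝕜))
    (r : ℕ) (hr : 1 ≤ r) (f : Fin (r + 1) → H)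
    (hf : ∀ s : Fin (r + 1),
      f s = ((Real.cos (Real.pi * s / (2 * r)) : ℝ) : 𝕜) • e + ((Real.sin (Real.pi * s / (2 * r)) : ℝ) : 𝕜) • e') :
    (inner 𝕜 (((List.ofFn fun s : Fin (r + 1) => projOnto 𝕜 (f s)).reverse.prod) e) e' : 𝕜)
      = ((Real.cos (Real.pi / (2 * r)) ^ r : ℝ) : 𝕜) := by
  have hf_circle : f = fun s : Fin (r + 1) => circlePoint 𝕜 e e' (s * (π / (2 * r))) := by
    funext s
    rw [hf, circlePoint, mul_div_assoc', mul_comm (s : ℝ)]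
  have hr_angle : (r : ℝ) * (π / (2 * r)) = π / 2 := by
    field_simp [show (r : ℝ) ≠ 0 from Nat.cast_ne_zero.mpr (by omega)]
  have he'_inner : inner 𝕜 e' e' = (1 : 𝕜) := by simp [inner_self_eq_norm_sq_to_K, he']
  have h_chain := prod_projOnto_circlePoint_apply he he' hee' (π / (2 * r)) r
  rw [circlePoint_zero, hr_angle, circlePoint_pi_div_two] at h_chain
  rw [hf_circle, h_chain, inner_smul_left, RCLike.conj_ofReal, he'_inner, mul_one]
end

section
/- Let H be an infinite-dimensional separable Hilbert space. Then there exist an orthonormal sequence (eᵢ)ᵢ≥₁ in H and orthogonal projections F₁, F₂, … on H, each with infinite-dimensional range, such that: ê₁ ≤ F₁; Fᵢ Fᵢ₊₁ = êᵢ₊₁ for all i ≥ 1; and Fᵢ Fⱼ = 0 whenever |i − j| ≥ 2. -/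
/-! Take an orthonormal family `u` indexed by `ℕ × ℕ`, put `eᵢ = u (i, 0)` and let `Fᵢ` project
onto the closed span of the column `u (i, ·)` together with `eᵢ₊₁`. Projections onto closed spans
of subfamilies of an orthonormal family multiply by intersecting the index sets,
`P_A P_B = P_(A ∩ B)`, so every relation reduces to a computation with index sets. -/

theorem exists_linearIndependent_nat_of_not_finiteDimensional {K V : Type*} [DivisionRing K]
    [AddCommGroup V] [Module K V] (h : ¬FiniteDimensional K V) :
    ∃ v : ℕ → V, LinearIndependent K v := by
  let b := Module.Free.chooseBasis K V
  have : Infinite (Module.Free.ChooseBasisIndex K V) := by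
    rw [← not_finite_iff_infinite]
    exact fun _ ↦ h (Module.Finite.of_basis b)
  exact ⟨b ∘ Infinite.natEmbedding _,
    b.linearIndependent.comp _ (Infinite.natEmbedding _).injective⟩

section

open Submodule

variable {𝕜 E ι : Type*} [RCLike 𝕜] [NormedAddCommGroup E] [InnerProductSpace 𝕜 E]

theorem exists_orthonormal_of_not_finiteDimensional_s9 (ι : Type*) [Countable ι]
    (h : ¬FiniteDimensional 𝕜 E) : ∃ u : ι → E, Orthonormal 𝕜 u := by
  obtain ⟨v, hv⟩ := exists_linearIndependent_nat_of_not_finiteDimensional h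
  obtain ⟨f, hf⟩ := Countable.exists_injective_nat ι
  exact ⟨InnerProductSpace.gramSchmidtNormed 𝕜 v ∘ f,
    (InnerProductSpace.gramSchmidtNormed_orthonormal hv).comp f hf⟩

theorem projOnto_eq_starProjection {f : E} (hf : ‖f‖ = 1) :
    projOnto 𝕜 f = (𝕜 ∙ f).starProjection := by
  ext x
  exact (starProjection_unit_singleton 𝕜 hf x).symm

variable (𝕜) in
noncomputable def closedSpanImage (u : ι → E) (A : Set ι) : Submodule 𝕜 E :=
  (span 𝕜 (u '' A)).topologicalClosure

namespace closedSpanImage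

variable {u : ι → E} {A B : Set ι}

instance [CompleteSpace E] : (closedSpanImage 𝕜 u A).HasOrthogonalProjection := by
  unfold closedSpanImage
  infer_instance

theorem apply_mem {a : ι} (ha : a ∈ A) : u a ∈ closedSpanImage 𝕜 u A :=
  le_topologicalClosure _ (subset_span ⟨a, ha, rfl⟩)

theorem mono (h : A ⊆ B) : closedSpanImage 𝕜 u A ≤ closedSpanImage 𝕜 u B :=
  topologicalClosure_mono (span_mono (Set.image_mono h))

theorem singleton_eq (a : ι) : closedSpanImage 𝕜 u {a} = 𝕜 ∙ u a := by
  rw [closedSpanImage, Set.image_singleton, topologicalClosure_eq_self]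

theorem _root_.Orthonormal.apply_mem_orthogonal_closedSpanImage (hu : Orthonormal 𝕜 u) {a : ι}
    (ha : a ∉ A) : u a ∈ (closedSpanImage 𝕜 u A)ᗮ := by
  rw [closedSpanImage, orthogonal_closure]
  have : span 𝕜 {u a} ⟂ span 𝕜 (u '' A) := isOrtho_span.2 <| by
    rintro _ rfl _ ⟨b, hb, rfl⟩
    exact hu.inner_eq_zero (ne_of_mem_of_not_mem hb ha).symm
  exact this (mem_span_singleton_self _)

theorem _root_.Orthonormal.isOrtho_closedSpanImage (hu : Orthonormal 𝕜 u) (h : Disjoint A B) :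
    closedSpanImage 𝕜 u A ⟂ closedSpanImage 𝕜 u B := by
  rw [isOrtho_iff_le]
  refine topologicalClosure_minimal _ (span_le.2 ?_) (closedSpanImage 𝕜 u B).isClosed_orthogonal
  rintro _ ⟨a, ha, rfl⟩
  exact hu.apply_mem_orthogonal_closedSpanImage (Set.disjoint_left.1 h ha)

theorem _root_.Orthonormal.not_finiteDimensional_closedSpanImage (hu : Orthonormal 𝕜 u)
    (hA : A.Infinite) : ¬FiniteDimensional 𝕜 (closedSpanImage 𝕜 u A) := by
  intro
  have hli : LinearIndependent 𝕜 fun a : A ↦ (⟨u a, apply_mem a.2⟩ : closedSpanImage 𝕜 u A) :=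
    .of_comp (closedSpanImage 𝕜 u A).subtype
      (hu.linearIndependent.comp _ Subtype.val_injective)
  exact hA (Set.finite_coe_iff.1 hli.finite)

variable [CompleteSpace E]

theorem starProjection_apply_of_mem {a : ι} (ha : a ∈ A) :
    (closedSpanImage 𝕜 u A).starProjection (u a) = u a :=
  starProjection_eq_self_iff.2 (apply_mem ha)

theorem _root_.Orthonormal.starProjection_closedSpanImage_apply_of_notMem (hu : Orthonormal 𝕜 u)
    {a : ι} (ha : a ∉ A) : (closedSpanImage 𝕜 u A).starProjection (u a) = 0 :=
  (starProjection_apply_eq_zero_iff _).2 (hu.apply_mem_orthogonal_closedSpanImage ha)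

theorem _root_.Orthonormal.starProjection_comp_starProjection_closedSpanImage
    (hu : Orthonormal 𝕜 u) (A B : Set ι) :
    (closedSpanImage 𝕜 u A).starProjection ∘L (closedSpanImage 𝕜 u B).starProjection =
      (closedSpanImage 𝕜 u (A ∩ B)).starProjection := by
  ext x
  -- Split `x` along the range of the right factor and its complement; on that range both sides
  -- are continuous and agree on the spanning vectors `u b`, `b ∈ B`.
  obtain ⟨y, hy, z, hz, rfl⟩ := exists_add_mem_mem_orthogonal (K := closedSpanImage 𝕜 u B) x
  have hz' : z ∈ (closedSpanImage 𝕜 u (A ∩ B))ᗮ := orthogonal_le (mono Set.inter_subset_right) hz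
  have hy' : (closedSpanImage 𝕜 u A).starProjection y =
      (closedSpanImage 𝕜 u (A ∩ B)).starProjection y := by
    refine ContinuousLinearMap.eqOn_closure_span ?_ (s := u '' B) (R₁ := 𝕜)
      (by rwa [← topologicalClosure_coe])
    rintro _ ⟨b, hb, rfl⟩
    by_cases ha : b ∈ A
    · rw [starProjection_apply_of_mem ha, starProjection_apply_of_mem (Set.mem_inter ha hb)]
    · rw [hu.starProjection_closedSpanImage_apply_of_notMem ha,
        hu.starProjection_closedSpanImage_apply_of_notMem fun h ↦ ha h.1]
  simp [starProjection_eq_self_iff.2 hy, (starProjection_apply_eq_zero_iff _).2 hz,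
    (starProjection_apply_eq_zero_iff _).2 hz', hy']

theorem _root_.Orthonormal.starProjection_closedSpanImage_singleton (hu : Orthonormal 𝕜 u)
    (a : ι) : (closedSpanImage 𝕜 u {a}).starProjection = projOnto 𝕜 (u a) := by
  simp_rw [projOnto_eq_starProjection (hu.1 a), singleton_eq]

end closedSpanImage

theorem isOrthoProj_starProjection [CompleteSpace E] (K : Submodule 𝕜 E)
    [K.HasOrthogonalProjection] : IsOrthoProj K.starProjection :=
  ⟨K.isIdempotentElem_starProjection, isSelfAdjoint_starProjection K⟩

end

def chainBlock (i : ℕ) : Set (ℕ × ℕ) := {p | p.1 = i ∨ p = (i + 1, 0)}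

theorem chainBlock_infinite (i : ℕ) : (chainBlock i).Infinite :=
  Set.infinite_of_injective_forall_mem (f := fun n ↦ (i, n))
    (fun _ _ h ↦ (Prod.ext_iff.1 h).2) fun _ ↦ Or.inl rfl

theorem zero_mem_chainBlock_zero : ((0, 0) : ℕ × ℕ) ∈ chainBlock 0 := Or.inl rfl

theorem chainBlock_inter_succ (i : ℕ) : chainBlock i ∩ chainBlock (i + 1) = {(i + 1, 0)} := by
  ext ⟨a, n⟩
  simp only [chainBlock, Set.mem_inter_iff, Set.mem_ofPred_eq, Set.mem_singleton_iff,
    Prod.mk.injEq]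
  omega

theorem disjoint_chainBlock {i j : ℕ} (h : 2 ≤ ((i : ℤ) - (j : ℤ)).natAbs) :
    Disjoint (chainBlock i) (chainBlock j) := by
  rw [Set.disjoint_left]
  rintro ⟨a, n⟩
  simp only [chainBlock, Set.mem_ofPred_eq, Prod.mk.injEq]
  omega

theorem exists_chained_infinite_projections_general
    {𝕜 H : Type*} [RCLike 𝕜] [NormedAddCommGroup H] [InnerProductSpace 𝕜 H]
    [CompleteSpace H]
    (hH : ¬ FiniteDimensional 𝕜 H) :
    ∃ (e : ℕ → H) (F : ℕ → (H →L[𝕜] H)),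
      Orthonormal 𝕜 e ∧
      (∀ i, IsOrthoProj (F i)) ∧
      (∀ i, ¬ FiniteDimensional 𝕜 ↥(LinearMap.range ((F i : H →L[𝕜] H) : H →ₗ[𝕜] H))) ∧
      F 0 * projOnto 𝕜 (e 0) = projOnto 𝕜 (e 0) ∧
      (∀ i, F i * F (i + 1) = projOnto 𝕜 (e (i + 1))) ∧
      (∀ i j : ℕ, 2 ≤ ((i : ℤ) - (j : ℤ)).natAbs → F i * F j = 0) := by
  obtain ⟨u, hu⟩ := exists_orthonormal_of_not_finiteDimensional_s9 (ℕ × ℕ) hH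
  have hmul := hu.starProjection_comp_starProjection_closedSpanImage
  refine ⟨fun i ↦ u (i, 0), fun i ↦ (closedSpanImage 𝕜 u (chainBlock i)).starProjection,
    hu.comp _ fun _ _ h ↦ (Prod.ext_iff.1 h).1, fun i ↦ isOrthoProj_starProjection _,
    fun i ↦ ?_, ?_, fun i ↦ ?_, fun i j hij ↦ ?_⟩
  · rw [Submodule.range_starProjection]
    exact hu.not_finiteDimensional_closedSpanImage (chainBlock_infinite i)
  · rw [← hu.starProjection_closedSpanImage_singleton, ContinuousLinearMap.mul_def, hmul,
      Set.inter_eq_right.2 (Set.singleton_subset_iff.2 zero_mem_chainBlock_zero)]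
  · rw [ContinuousLinearMap.mul_def, hmul, chainBlock_inter_succ,
      hu.starProjection_closedSpanImage_singleton]
  · rw [ContinuousLinearMap.mul_def]
    exact (hu.isOrtho_closedSpanImage (disjoint_chainBlock hij)).starProjection_comp_starProjection

/-- In an infinite-dimensional separable Hilbert space there are an orthonormal sequence
`(eᵢ)` and orthogonal projections `F₁, F₂, …`, each with infinite-dimensional range, with
`ê₁ ≤ F₁`, `Fᵢ Fᵢ₊₁ = êᵢ₊₁`, and `Fᵢ Fⱼ = 0` for `|i − j| ≥ 2`.  (Indices start at `0`.) -/
theorem exists_chained_infinite_projections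
    {𝕜 H : Type*} [RCLike 𝕜] [NormedAddCommGroup H] [InnerProductSpace 𝕜 H]
    [CompleteSpace H] [TopologicalSpace.SeparableSpace H]
    (hH : ¬ FiniteDimensional 𝕜 H) :
    ∃ (e : ℕ → H) (F : ℕ → (H →L[𝕜] H)),
      Orthonormal 𝕜 e ∧
      (∀ i, IsOrthoProj (F i)) ∧
      (∀ i, ¬ FiniteDimensional 𝕜 ↥(LinearMap.range ((F i : H →L[𝕜] H) : H →ₗ[𝕜] H))) ∧
      F 0 * projOnto 𝕜 (e 0) = projOnto 𝕜 (e 0) ∧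
      (∀ i, F i * F (i + 1) = projOnto 𝕜 (e (i + 1))) ∧
      (∀ i j : ℕ, 2 ≤ ((i : ℤ) - (j : ℤ)).natAbs → F i * F j = 0) :=
  exists_chained_infinite_projections_general hH
end
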